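/- arXiv:1007.3020 — 5 statements merged into one kernel-verified Lean document; each statement's English description precedes it below -/
import Mathlib

section
/- For the Weierstrass prime factor W(z,p) and any integer p ≥ 1, one has log|W(z,p)| ≤ A_p·|z|^p for all complex z with |z| ≥ 1/3, where A_p = 3e(2 + log p). -/
/-!
Since `log ‖W(z,p)‖ = Re (log (1 - z) + ∑_{k ≤ p} z^k/k)` is the real part of the remainder
of the Taylor series of `log (1 - z)` after degree `p`, it is at most
`‖z‖^(p+1) / ((p+1)(1 - ‖z‖)) ≤ ‖z‖^p` as long as `‖z‖ ≤ p/(p+1)`.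
For larger `‖z‖` one has `‖z‖^p ≥ (p/(p+1))^p ≥ 1/e`, and the crude estimate
`log ‖W(z,p)‖ ≤ log (1 + ‖z‖) + ∑_{k ≤ p} ‖z‖^k/k ≤ (2 + log p) max(1, ‖z‖^p)`
suffices.
-/

/-- Weierstrass prime factor of order `p ≥ 1`:
`W(z,p) = (1-z) * exp (∑_{k=1}^p z^k/k)`. -/
noncomputable def Wfac (z : ℂ) (p : ℕ) : ℂ :=
  (1 - z) * Complex.exp (∑ k ∈ Finset.Icc 1 p, z ^ k / (k : ℂ))

lemma pow_le_max_one_pow {r : ℝ} (hr : 0 ≤ r) {k p : ℕ} (hkp : k ≤ p) :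
    r ^ k ≤ max 1 (r ^ p) := by
  rcases le_total r 1 with hr1 | hr1
  · exact le_max_of_le_left (pow_le_one₀ hr hr1)
  · exact le_max_of_le_right (pow_le_pow_right₀ hr1 hkp)

lemma sum_Icc_pow_div_le (p : ℕ) {r : ℝ} (hr : 0 ≤ r) :
    ∑ k ∈ Finset.Icc 1 p, r ^ k / k ≤ max 1 (r ^ p) * (1 + Real.log p) := calc
  ∑ k ∈ Finset.Icc 1 p, r ^ k / k
      ≤ ∑ k ∈ Finset.Icc 1 p, max 1 (r ^ p) * (k : ℝ)⁻¹ := by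
    refine Finset.sum_le_sum fun k hk => ?_
    rw [div_eq_mul_inv]
    gcongr
    exact pow_le_max_one_pow hr (Finset.mem_Icc.mp hk).2
  _ = max 1 (r ^ p) * harmonic p := by
    rw [← Finset.mul_sum, harmonic_eq_sum_Icc]
    push_cast
    rfl
  _ ≤ max 1 (r ^ p) * (1 + Real.log p) := by
    gcongr
    exact harmonic_le_one_add_log p

lemma one_le_exp_one_mul_pow_of_div_le {p : ℕ} {r : ℝ} (hr : (p : ℝ) / (p + 1) ≤ r) :
    1 ≤ Real.exp 1 * r ^ p := by
  rcases Nat.eq_zero_or_pos p with rfl | hp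
  · simp [Real.one_le_exp zero_le_one]
  calc 1 = (1 + (p : ℝ)⁻¹) ^ p * ((p : ℝ) / (p + 1)) ^ p := by
        rw [← mul_pow]; field_simp; simp
    _ ≤ Real.exp 1 * r ^ p := by
        gcongr
        exact Real.one_add_inv_pow_le_exp

lemma log_norm_Wfac (p : ℕ) {z : ℂ} (hz : z ≠ 1) :
    Real.log ‖Wfac z p‖ = Real.log ‖1 - z‖ + (∑ k ∈ Finset.Icc 1 p, z ^ k / (k : ℂ)).re := by
  rw [Wfac, norm_mul, Real.log_mul (by simpa [sub_eq_zero] using hz.symm) (by simp),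
    Complex.norm_exp, Real.log_exp]

lemma sum_Icc_pow_div_eq_neg_logTaylor (p : ℕ) (z : ℂ) :
    ∑ k ∈ Finset.Icc 1 p, z ^ k / (k : ℂ) = -Complex.logTaylor (p + 1) (-z) := by
  rw [Complex.logTaylor, Finset.sum_range_succ', ← Finset.Ico_add_one_right_eq_Icc,
    Finset.sum_Ico_eq_sum_range, Nat.add_sub_cancel, Nat.cast_zero, div_zero, add_zero,
    ← Finset.sum_neg_distrib]
  refine Finset.sum_congr rfl fun k _ => ?_
  rw [neg_pow z, ← mul_assoc, ← pow_add, show k + 1 + 1 + (k + 1) = 2 * (k + 1) + 1 by ring,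
    pow_succ, pow_mul, neg_one_sq, one_pow, add_comm 1 k]
  ring

lemma log_norm_Wfac_le_of_norm_lt_one (p : ℕ) {z : ℂ} (hz : ‖z‖ < 1) :
    Real.log ‖Wfac z p‖ ≤ ‖z‖ ^ (p + 1) * (1 - ‖z‖)⁻¹ / (p + 1) := by
  have hz1 : z ≠ 1 := by rintro rfl; simp at hz
  have htail := Complex.norm_log_sub_logTaylor_le p (z := -z) (by rwa [norm_neg])
  rw [norm_neg, ← sub_eq_add_neg] at htail
  rw [log_norm_Wfac p hz1, sum_Icc_pow_div_eq_neg_logTaylor, ← Complex.log_re,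
    ← Complex.add_re, ← sub_eq_add_neg]
  exact (Complex.re_le_norm _).trans htail

lemma log_norm_Wfac_le_pow_of_norm_le_div (p : ℕ) {z : ℂ} (hz : ‖z‖ ≤ p / (p + 1)) :
    Real.log ‖Wfac z p‖ ≤ ‖z‖ ^ p := by
  have hz1 : ‖z‖ < 1 := hz.trans_lt ((div_lt_one (by positivity)).mpr (lt_add_one _))
  have hgap : 1 ≤ ((p : ℝ) + 1) * (1 - ‖z‖) := by
    rw [le_div_iff₀ (by positivity)] at hz
    linarith
  calc Real.log ‖Wfac z p‖ ≤ ‖z‖ ^ (p + 1) * (1 - ‖z‖)⁻¹ / (p + 1) :=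
        log_norm_Wfac_le_of_norm_lt_one p hz1
    _ = ‖z‖ ^ (p + 1) / ((p + 1) * (1 - ‖z‖)) := by field_simp
    _ ≤ ‖z‖ ^ (p + 1) := div_le_self (by positivity) hgap
    _ ≤ ‖z‖ ^ p := pow_le_pow_of_le_one (norm_nonneg z) hz1.le (Nat.le_succ p)

lemma log_norm_Wfac_le (p : ℕ) (hp : 1 ≤ p) (z : ℂ) :
    Real.log ‖Wfac z p‖ ≤ (2 + Real.log p) * max 1 (‖z‖ ^ p) := by
  rcases eq_or_ne z 1 with rfl | hz1
  · simp only [Wfac, sub_self, zero_mul, norm_zero, Real.log_zero]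
    positivity
  have hlog : Real.log ‖1 - z‖ ≤ max 1 (‖z‖ ^ p) := calc
    Real.log ‖1 - z‖ ≤ ‖1 - z‖ - 1 :=
      Real.log_le_sub_one_of_pos (by simpa [sub_eq_zero] using hz1.symm)
    _ ≤ ‖z‖ := by linarith [norm_sub_le (1 : ℂ) z, norm_one (α := ℂ)]
    _ ≤ max 1 (‖z‖ ^ p) := by simpa using pow_le_max_one_pow (norm_nonneg z) hp
  have hsum :
      (∑ k ∈ Finset.Icc 1 p, z ^ k / (k : ℂ)).re ≤ max 1 (‖z‖ ^ p) * (1 + Real.log p) :=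
    calc _ ≤ ‖∑ k ∈ Finset.Icc 1 p, z ^ k / (k : ℂ)‖ := Complex.re_le_norm _
      _ ≤ ∑ k ∈ Finset.Icc 1 p, ‖z‖ ^ k / k := by
        refine (norm_sum_le _ _).trans_eq (Finset.sum_congr rfl fun k _ => ?_)
        rw [norm_div, norm_pow, Complex.norm_natCast]
      _ ≤ _ := sum_Icc_pow_div_le p (norm_nonneg z)
  rw [log_norm_Wfac p hz1]
  linarith

theorem stmt1_general (p : ℕ) (hp : 1 ≤ p) (z : ℂ) :
    Real.log ‖Wfac z p‖ ≤ 3 * Real.exp 1 * (2 + Real.log p) * ‖z‖ ^ p := by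
  have hA : 1 ≤ 3 * Real.exp 1 * (2 + Real.log p) := by
    nlinarith [Real.one_le_exp zero_le_one, Real.log_natCast_nonneg p]
  rcases le_or_gt ‖z‖ (p / (p + 1)) with hz | hz
  · calc Real.log ‖Wfac z p‖ ≤ ‖z‖ ^ p := log_norm_Wfac_le_pow_of_norm_le_div p hz
      _ ≤ _ := le_mul_of_one_le_left (by positivity) hA
  · have hM : max 1 (‖z‖ ^ p) ≤ Real.exp 1 * ‖z‖ ^ p :=
      max_le (one_le_exp_one_mul_pow_of_div_le hz.le)
        (le_mul_of_one_le_left (by positivity) (Real.one_le_exp zero_le_one))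
    have hpos : 0 ≤ (2 + Real.log p) * (Real.exp 1 * ‖z‖ ^ p) := by positivity
    calc Real.log ‖Wfac z p‖ ≤ (2 + Real.log p) * max 1 (‖z‖ ^ p) :=
          log_norm_Wfac_le p hp z
      _ ≤ (2 + Real.log p) * (Real.exp 1 * ‖z‖ ^ p) := by gcongr
      _ ≤ _ := by linarith

theorem stmt1 (p : ℕ) (hp : 1 ≤ p) (z : ℂ) (hz : 1 / 3 ≤ ‖z‖) :
    Real.log ‖Wfac z p‖ ≤ 3 * Real.exp 1 * (2 + Real.log p) * ‖z‖ ^ p :=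
  stmt1_general p hp z
end

section
/- For w, ω in the upper half-plane with ω = |ω|e^{iτ} and |w/ω| < 1/3, the Nevanlinna prime factor satisfies |N_p(w,ω) - 1| ≤ 6·|sin τ|·|w/ω|^{p+1}. -/
/-- Nevanlinna prime factor of order `p`: `N_p(w,ω) = W(w/ω,p) / W(w/conj ω,p)`. -/
noncomputable def Nfac (w ω : ℂ) (p : ℕ) : ℂ :=
  Wfac (w / ω) p / Wfac (w / (starRingEnd ℂ ω)) p

/-!
On the unit disc `W(z,p) = exp (log (1 - z) + ∑_{k ≤ p} z^k/k)`, and the exponent has derivative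
`-z^p/(1 - z)`; by the mean value inequality it is `x^p/(1 - x)`-Lipschitz on the disc of radius
`x`. Hence `N_p(w,ω) = e^L` with `|L| ≤ x^p/(1 - x) · |w/ω - w/ω̄| = x^p/(1 - x) · 2|sin τ| x`,
where `x = |w/ω|`. For `x < 1/3` this gives `|L| ≤ 3|sin τ| x^{p+1} ≤ 1`, and `|e^L - 1| ≤ 2|L|`.
-/

open Complex ComplexConjugate

/-- A holomorphic logarithm of `W(z,p)` on the unit disc. -/
noncomputable def logWfac (z : ℂ) (p : ℕ) : ℂ :=
  log (1 - z) - logTaylor (p + 1) (-z)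

lemma logTaylor_succ_neg (p : ℕ) (z : ℂ) :
    logTaylor (p + 1) (-z) = -∑ k ∈ Finset.Icc 1 p, z ^ k / k := by
  rw [logTaylor, Finset.range_eq_Ico, Finset.sum_eq_sum_Ico_succ_bot (Nat.succ_pos p),
    ← Finset.sum_neg_distrib]
  simp only [Nat.cast_zero, div_zero, zero_add]
  refine Finset.sum_congr rfl fun k _ => ?_
  rw [neg_pow, pow_succ]
  ring_nf
  rw [mul_comm k 2, pow_mul]
  norm_num

lemma Wfac_eq_exp_logWfac {z : ℂ} (hz : ‖z‖ < 1) (p : ℕ) :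
    Wfac z p = exp (logWfac z p) := by
  have hne : 1 - z ≠ 0 := sub_ne_zero.mpr fun h => by simp [← h] at hz
  rw [Wfac, logWfac, logTaylor_succ_neg, sub_neg_eq_add, exp_add, exp_log hne]

lemma hasDerivAt_logWfac {z : ℂ} (hz : ‖z‖ < 1) (p : ℕ) :
    HasDerivAt (logWfac · p) (-(z ^ p * (1 - z)⁻¹)) z := by
  have := (hasDerivAt_log_sub_logTaylor p (mem_slitPlane_of_norm_lt_one (z := -z)
    (by simpa using hz))).comp z (hasDerivAt_neg z)
  simpa [logWfac, Function.comp_def, ← sub_eq_add_neg] using this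

lemma norm_logWfac_sub_le {z z' : ℂ} {x : ℝ} (hz : ‖z‖ ≤ x) (hz' : ‖z'‖ ≤ x) (hx : x < 1)
    (p : ℕ) : ‖logWfac z' p - logWfac z p‖ ≤ x ^ p / (1 - x) * ‖z' - z‖ := by
  refine (convex_closedBall (0 : ℂ) x).norm_image_sub_le_of_norm_hasDerivWithin_le
    (fun u hu => (hasDerivAt_logWfac ?_ p).hasDerivWithinAt) (fun u hu => ?_)
    (by simpa using hz) (by simpa using hz')
  · exact (mem_closedBall_zero_iff.mp hu).trans_lt hx
  · have hu : ‖u‖ ≤ x := mem_closedBall_zero_iff.mp hu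
    have h1u : 1 - x ≤ ‖1 - u‖ := by
      linarith [norm_sub_norm_le (1 : ℂ) u, norm_one (α := ℂ)]
    have hx0 : 0 ≤ x := (norm_nonneg z).trans hz
    rw [norm_neg, norm_mul, norm_inv, norm_pow, ← div_eq_mul_inv]
    gcongr

lemma norm_div_conj (w ω : ℂ) : ‖w / conj ω‖ = ‖w / ω‖ := by
  rw [norm_div, Complex.norm_conj, ← norm_div]

lemma norm_div_conj_sub_div (w ω : ℂ) :
    ‖w / conj ω - w / ω‖ = 2 * |Real.sin (arg ω)| * ‖w / ω‖ := by
  rcases eq_or_ne ω 0 with rfl | hω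
  · simp
  have hω' : conj ω ≠ 0 := by simpa using hω
  have : w / conj ω - w / ω = w / ω * ((ω - conj ω) / conj ω) := by
    field_simp
  rw [this, norm_mul, norm_div (ω - _), Complex.norm_conj, sub_conj, sin_arg, abs_div, abs_norm]
  simp only [ofReal_mul, ofReal_ofNat, Complex.norm_mul, norm_ofNat, norm_real, Real.norm_eq_abs,
    norm_I, mul_one]
  ring

lemma Nfac_eq_exp {w ω : ℂ} (h : ‖w / ω‖ < 1) (p : ℕ) :
    Nfac w ω p = exp (logWfac (w / ω) p - logWfac (w / conj ω) p) := by
  have h' : ‖w / conj ω‖ < 1 := norm_div_conj w ω ▸ h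
  rw [Nfac, Wfac_eq_exp_logWfac h, Wfac_eq_exp_logWfac h', exp_sub]

theorem stmt5_general (p : ℕ) (w ω : ℂ)
    (h : ‖w / ω‖ < 1 / 3) :
    ‖Nfac w ω p - 1‖ ≤ 6 * |Real.sin ω.arg| * ‖w / ω‖ ^ (p + 1) := by
  set x := ‖w / ω‖
  set s := |Real.sin ω.arg|
  set L := logWfac (w / ω) p - logWfac (w / conj ω) p
  have hx0 : 0 ≤ x := norm_nonneg _
  have hs1 : s ≤ 1 := Real.abs_sin_le_one _
  have hgeom : x ^ p / (1 - x) ≤ 3 / 2 * x ^ p := by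
    rw [div_le_iff₀ (by linarith)]
    nlinarith [pow_nonneg hx0 p]
  have hL : ‖L‖ ≤ 3 * s * x ^ (p + 1) :=
    calc ‖L‖ ≤ x ^ p / (1 - x) * ‖w / ω - w / conj ω‖ :=
          norm_logWfac_sub_le (norm_div_conj w ω).le le_rfl (by linarith) p
      _ = x ^ p / (1 - x) * (2 * s * x) := by rw [norm_sub_rev, norm_div_conj_sub_div]
      _ ≤ 3 / 2 * x ^ p * (2 * s * x) := by gcongr
      _ = 3 * s * x ^ (p + 1) := by ring
  have hL1 : ‖L‖ ≤ 1 :=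
    calc ‖L‖ ≤ 3 * s * x ^ (p + 1) := hL
      _ ≤ 3 * 1 * x := by gcongr; exact pow_le_of_le_one hx0 (by linarith) (by omega)
      _ ≤ 1 := by linarith
  calc ‖Nfac w ω p - 1‖ = ‖exp L - 1‖ := by rw [Nfac_eq_exp (by linarith)]
    _ ≤ 2 * ‖L‖ := norm_exp_sub_one_le hL1
    _ ≤ 6 * s * x ^ (p + 1) := by linarith

theorem stmt5 (p : ℕ) (w ω : ℂ) (hw : 0 < w.im) (hω : 0 < ω.im)
    (h : ‖w / ω‖ < 1 / 3) :
    ‖Nfac w ω p - 1‖ ≤ 6 * |Real.sin ω.arg| * ‖w / ω‖ ^ (p + 1) :=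
  stmt5_general p w ω h
end

section
/- Let E be a nonempty closed subset of the unit circle and write its open complement as a disjoint union of open arcs γ_j with |γ_j| decreasing to 0. Then for small x > 0, the measure of the x-neighborhood satisfies |E_x| = ∑_{j=N+1}^∞ |γ_j| + (2N/π)·arcsin(x/2) + |E|, where N = N(x) is determined by |γ_{N+1}| ≤ (2/π)·arcsin(x/2) < |γ_N|. -/
open MeasureTheory Metric Set Filter

instance : Fact ((0 : ℝ) < 1) := ⟨one_pos⟩

/-!
Chordal distance `< x` means arc distance `< s / 2` with `s = (2/π) arcsin (x/2)`, so `E_x` is the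
`s / 2`-thickening of `E`. The endpoints of every gap `γ_j` lie in `E`, since they are in the
closure of `γ_j` and no other (open, disjoint) gap meets that closure. Hence a point of `γ_j` is
at distance `≥ s / 2` from `E` exactly when it lies in the concentric closed arc of length
`|γ_j| - s`, which is empty for the short gaps. So `|T ∖ E_x| = ∑_{j ≤ M} (|γ_j| - s)`, and
`|E| = 1 - ∑ |γ_j|` gives the formula.
-/

open Function Real

theorem frontier_subset_of_compl_eq_iUnion {X ι : Type*} [TopologicalSpace X] {E : Set X}
    {U : ι → Set X} (hU : ∀ i, IsOpen (U i)) (hdisj : Pairwise (Disjoint on U))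
    (hunion : Eᶜ = ⋃ i, U i) (i : ι) : frontier (U i) ⊆ E := by
  intro x hx
  by_contra hxE
  obtain ⟨k, hxk⟩ := mem_iUnion.1 (hunion ▸ hxE : x ∈ ⋃ i, U i)
  rw [(hU i).frontier_eq] at hx
  have hki : k ≠ i := fun h => hx.2 (h ▸ hxk)
  exact Set.disjoint_left.1 ((hdisj hki).symm.closure_left (hU k)) hx.1 hxk

theorem hasSum_measureReal_iUnion {X ι : Type*} [MeasurableSpace X] {μ : Measure X}
    [IsFiniteMeasure μ] [Countable ι] {U : ι → Set X} (hU : ∀ i, MeasurableSet (U i))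
    (hdisj : Pairwise (Disjoint on U)) : HasSum (fun i => μ.real (U i)) (μ.real (⋃ i, U i)) := by
  have hfin : ∑' i, μ (U i) ≠ ⊤ := measure_iUnion hdisj hU ▸ measure_ne_top μ _
  rw [measureReal_def, measure_iUnion hdisj hU,
    ENNReal.tsum_toReal_eq fun i => measure_ne_top μ _]
  exact ENNReal.hasSum_toReal hfin

theorem toReal_tsum_ofReal_sub_eq_sum_range {ℓ : ℕ → ℝ} (hℓ : Antitone ℓ) {s : ℝ} {M : ℕ}
    (hM₁ : ℓ (M + 1) ≤ s) (hM : s ≤ ℓ M) :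
    (∑' j, ENNReal.ofReal (ℓ j - s)).toReal = ∑ j ∈ Finset.range (M + 1), (ℓ j - s) := by
  have hlong : ∀ j ∈ Finset.range (M + 1), 0 ≤ ℓ j - s := fun j hj =>
    sub_nonneg.2 (hM.trans (hℓ (Finset.mem_range_succ_iff.1 hj)))
  have hshort : ∀ j ∉ Finset.range (M + 1), ENNReal.ofReal (ℓ j - s) = 0 := fun j hj => by
    have := hℓ (not_lt.1 (mt Finset.mem_range.2 hj))
    exact ENNReal.ofReal_of_nonpos (by linarith)
  rw [tsum_eq_sum hshort, ← ENNReal.ofReal_sum_of_nonneg hlong,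
    ENNReal.toReal_ofReal (Finset.sum_nonneg hlong)]

namespace AddCircle

variable {p : ℝ}

theorem exists_coe_eq_abs_eq_norm (x : AddCircle p) :
    ∃ u : ℝ, (u : AddCircle p) = x ∧ |u| = ‖x‖ := by
  obtain ⟨y, rfl⟩ := QuotientAddGroup.mk_surjective x
  refine ⟨y - round (p⁻¹ * y) * p, ?_, (norm_eq p).symm⟩
  rw [coe_sub, (coe_eq_zero_iff p).2 ⟨round (p⁻¹ * y), zsmul_eq_mul _ _⟩, sub_zero]

theorem norm_coe_le_abs (a : ℝ) : ‖(a : AddCircle p)‖ ≤ |a| :=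
  QuotientAddGroup.norm_mk_le_norm

theorem dist_add_coe_le (c : AddCircle p) (a : ℝ) : dist (c + a) c ≤ |a| := by
  simpa [dist_eq_norm] using norm_coe_le_abs a

theorem dist_add_coe_eq (hp : 0 < p) (c : AddCircle p) {a : ℝ} (ha : |a| ≤ p / 2) :
    dist (c + a) c = |a| := by
  rw [dist_eq_norm, add_sub_cancel_left, norm_coe_eq_abs_iff p hp.ne', abs_of_pos hp]
  exact ha

theorem add_coe_mem_frontier_ball (hp : 0 < p) (c : AddCircle p) {a r : ℝ} (ha : |a| = r)
    (hr₀ : 0 < r) (hr : r ≤ p / 2) : c + a ∈ frontier (ball c r) := by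
  subst ha
  rw [isOpen_ball.frontier_eq]
  refine ⟨?_, by simp [dist_add_coe_eq hp c hr]⟩
  have hcont : Continuous fun τ : ℝ => c + ((τ * a : ℝ) : AddCircle p) := by fun_prop
  have hmaps :
      MapsTo (fun τ : ℝ => c + ((τ * a : ℝ) : AddCircle p)) (Ico 0 1) (ball c |a|) := by
    intro τ hτ
    rw [mem_ball]
    calc _ ≤ |τ * a| := dist_add_coe_le c _
      _ = τ * |a| := by rw [abs_mul, abs_of_nonneg hτ.1]
      _ < |a| := mul_lt_of_lt_one_left hr₀ hτ.2
  have h1 : (1 : ℝ) ∈ closure (Ico 0 1) := by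
    rw [closure_Ico zero_ne_one]; exact right_mem_Icc.2 zero_le_one
  simpa only [one_mul] using hcont.continuousWithinAt.mem_closure h1 hmaps

theorem exists_abs_eq_dist_add_coe_le {c t : AddCircle p} {r : ℝ} (ht : dist t c ≤ r) :
    ∃ a : ℝ, |a| = r ∧ dist t (c + a) ≤ r - dist t c := by
  obtain ⟨u, hu, hun⟩ := exists_coe_eq_abs_eq_norm (t - c)
  rw [← dist_eq_norm] at hun
  have hr : 0 ≤ r := dist_nonneg.trans ht
  have hdist : ∀ a : ℝ, dist t (c + a) ≤ |u - a| := fun a => by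
    rw [dist_eq_norm, show t - (c + a) = ((u - a : ℝ) : AddCircle p) by rw [coe_sub, hu]; abel]
    exact norm_coe_le_abs _
  rcases le_total 0 u with hu0 | hu0
  · refine ⟨r, abs_of_nonneg hr, (hdist r).trans_eq ?_⟩
    rw [abs_of_nonneg hu0] at hun
    rw [abs_of_nonpos (by linarith)]; linarith
  · refine ⟨-r, by simp [abs_of_nonneg hr], (hdist (-r)).trans_eq ?_⟩
    rw [abs_of_nonpos hu0] at hun
    rw [abs_of_nonneg (by linarith)]; linarith

theorem compl_thickening_eq_iUnion_closedBall {ι : Type*} (hp : 0 < p) {E : Set (AddCircle p)}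
    {c : ι → AddCircle p} {r : ι → ℝ} (hr : ∀ i, r i ≤ p / 2)
    (hdisj : Pairwise (Disjoint on fun i => ball (c i) (r i)))
    (hunion : Eᶜ = ⋃ i, ball (c i) (r i)) {δ : ℝ} (hδ : 0 < δ) :
    (thickening δ E)ᶜ = ⋃ i, closedBall (c i) (r i - δ) := by
  ext t
  simp only [mem_compl_iff, mem_thickening_iff, not_exists, not_and, not_lt, mem_iUnion,
    mem_closedBall]
  constructor
  · intro hfar
    have htE : t ∉ E := fun ht => (hfar t ht).not_gt (by simpa using hδ)
    obtain ⟨i, hti⟩ := mem_iUnion.1 (hunion ▸ htE : t ∈ ⋃ i, ball (c i) (r i))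
    obtain ⟨a, ha, hta⟩ := exists_abs_eq_dist_add_coe_le (mem_ball.1 hti).le
    have hendpoint : c i + a ∈ E := frontier_subset_of_compl_eq_iUnion (fun i => isOpen_ball)
      hdisj hunion i (add_coe_mem_frontier_ball hp (c i) ha (dist_nonneg.trans_lt hti) (hr i))
    exact ⟨i, by linarith [hfar _ hendpoint]⟩
  · rintro ⟨i, hti⟩ e he
    have hei : r i ≤ dist e (c i) :=
      not_lt.1 fun h => (hunion ▸ mem_iUnion_of_mem i (mem_ball.2 h) : e ∈ Eᶜ) he
    linarith [dist_triangle e t (c i), dist_comm e t]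

theorem volume_compl_thickening [hp : Fact (0 < p)] {ι : Type*} [Countable ι]
    {E : Set (AddCircle p)} {c : ι → AddCircle p} {r : ι → ℝ} (hr : ∀ i, r i ≤ p / 2)
    (hdisj : Pairwise (Disjoint on fun i => ball (c i) (r i)))
    (hunion : Eᶜ = ⋃ i, ball (c i) (r i)) {δ : ℝ} (hδ : 0 < δ) :
    volume (thickening δ E)ᶜ = ∑' i, ENNReal.ofReal (2 * (r i - δ)) := by
  have hsub : ∀ i, closedBall (c i) (r i - δ) ⊆ ball (c i) (r i) :=
    fun i => closedBall_subset_ball (by linarith)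
  rw [compl_thickening_eq_iUnion_closedBall hp.out hr hdisj hunion hδ,
    measure_iUnion (fun i j hij => (hdisj hij).mono (hsub i) (hsub j))
      fun _ => measurableSet_closedBall]
  refine tsum_congr fun i => ?_
  rw [volume_closedBall, min_eq_right (by linarith [hr i])]

end AddCircle

theorem setOf_exists_chord_lt_eq_thickening (E : Set (AddCircle (1 : ℝ))) {x : ℝ} (hx₀ : 0 ≤ x)
    (hx₂ : x ≤ 2) :
    {t | ∃ e ∈ E, 2 * sin (π * dist t e) < x} = thickening (arcsin (x / 2) / π) E := by
  ext t
  simp only [mem_ofPred_eq, mem_thickening_iff]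
  refine exists_congr fun e => and_congr_right fun _ => ?_
  have hd : dist t e ≤ 1 / 2 := by
    simpa [dist_eq_norm] using AddCircle.norm_le_half_period 1 (x := t - e) one_ne_zero
  have hmem : π * dist t e ∈ Icc (-(π / 2)) (π / 2) :=
    ⟨by nlinarith [pi_pos, dist_nonneg (x := t) (y := e)], by nlinarith [pi_pos]⟩
  rw [lt_div_iff₀' pi_pos, lt_arcsin_iff_sin_lt hmem ⟨by linarith, by linarith⟩]
  constructor <;> intro h <;> linarith

/-- The circle is `ℝ/ℤ`, so the quotient distance is normalized arc length and a point at arc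
distance `s` is at chordal distance `2 sin (π s)`. Gaps are indexed from `0`, so the long gaps are
`γ_0, …, γ_M` and the paper's `N` is `M + 1`. -/
theorem stmt9_general (E : Set (AddCircle (1 : ℝ))) (hE : IsClosed E)
    (c : ℕ → AddCircle (1 : ℝ)) (ℓ : ℕ → ℝ) (hpos : ∀ j, 0 < ℓ j)
    (hdisj : Pairwise fun i j => Disjoint (Metric.ball (c i) (ℓ i / 2)) (Metric.ball (c j) (ℓ j / 2)))
    (hunion : Eᶜ = ⋃ j, Metric.ball (c j) (ℓ j / 2))
    (hlen : ∀ j, volume (Metric.ball (c j) (ℓ j / 2)) = ENNReal.ofReal (ℓ j))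
    (hmono : Antitone ℓ) :
    ∃ x₀ > 0, ∀ x, 0 < x → x < x₀ → ∀ M : ℕ,
      ℓ (M + 1) ≤ (2 / Real.pi) * Real.arcsin (x / 2) →
      (2 / Real.pi) * Real.arcsin (x / 2) < ℓ M →
      (volume {t : AddCircle (1 : ℝ) | ∃ e ∈ E, 2 * Real.sin (Real.pi * dist t e) < x}).toReal
        = (∑' j : ℕ, ℓ (M + 1 + j)) +
            (2 * ((M : ℝ) + 1) / Real.pi) * Real.arcsin (x / 2) + (volume E).toReal := by
  refine ⟨2, two_pos, fun x hx₀ hx₂ M hM₁ hM => ?_⟩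
  set s := 2 / π * arcsin (x / 2) with hs_def
  have hs : 0 < s := mul_pos (by positivity) (arcsin_pos.2 (by linarith))
  have hℓ : ∀ j, ℓ j / 2 ≤ 1 / 2 := fun j => by
    have h := measure_mono (μ := volume) (subset_univ (ball (c j) (ℓ j / 2)))
    rw [hlen, AddCircle.measure_univ, ENNReal.ofReal_le_ofReal_iff zero_le_one] at h
    linarith
  have hgaps : HasSum ℓ (volume.real Eᶜ) := by
    rw [hunion]
    refine (hasSum_measureReal_iUnion (fun _ => measurableSet_ball) hdisj).congr_fun fun j => ?_
    rw [measureReal_def, hlen, ENNReal.toReal_ofReal (hpos j).le]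
  have hcompl : volume.real (thickening (s / 2) E)ᶜ = ∑ j ∈ Finset.range (M + 1), (ℓ j - s) := by
    simp_rw [measureReal_def, AddCircle.volume_compl_thickening hℓ hdisj hunion (half_pos hs),
      show ∀ j, 2 * (ℓ j / 2 - s / 2) = ℓ j - s from fun j => by ring]
    exact toReal_tsum_ofReal_sub_eq_sum_range hmono hM₁ hM.le
  have hunit : volume.real (univ : Set (AddCircle (1 : ℝ))) = 1 := by simp [measureReal_def]
  have hvolE : volume.real E = 1 - ∑' j, ℓ j := by
    rw [hgaps.tsum_eq, measureReal_compl hE.measurableSet, hunit]; ring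
  have hvolEx :
      volume.real (thickening (s / 2) E) = 1 - ∑ j ∈ Finset.range (M + 1), (ℓ j - s) := by
    rw [← hcompl, measureReal_compl isOpen_thickening.measurableSet, hunit]; ring
  rw [setOf_exists_chord_lt_eq_thickening E hx₀.le hx₂.le,
    show arcsin (x / 2) / π = s / 2 by ring, ← measureReal_def, ← measureReal_def, hvolEx, hvolE,
    ← hgaps.summable.sum_add_tsum_nat_add (M + 1), Finset.sum_sub_distrib, Finset.sum_const,
    Finset.card_range, nsmul_eq_mul, hs_def]
  simp only [add_comm _ (M + 1)]
  push_cast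
  ring

/-- Let `E` be a nonempty closed subset of the unit circle (modelled as `ℝ/ℤ`, so
that normalized arc length gives `|T| = 1`; a point at normalized arc distance `s`
is at chordal distance `2 sin (π s)`).  Write the open complement of `E` as a
disjoint union of open arcs `γ_j = ball (c j) (ℓ j / 2)` of lengths `ℓ j ↓ 0`.
Then for small `x > 0`, the normalized measure of the chordal `x`-neighborhood
`E_x = {t : ∃ e ∈ E, chordal-dist(t,e) < x}` equals
`∑_{j > N} |γ_j| + (2N/π) arcsin (x/2) + |E|`, where `N` (the number of "long"
gaps) is determined by `|γ_{N+1}| ≤ (2/π) arcsin (x/2) < |γ_N|`.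
(Here gaps are indexed from `0`, so the long gaps are `γ_0, …, γ_M` and
`N = M + 1` counts them.) -/
theorem stmt9 (E : Set (AddCircle (1 : ℝ))) (hE : IsClosed E) (hne : E.Nonempty)
    (c : ℕ → AddCircle (1 : ℝ)) (ℓ : ℕ → ℝ) (hpos : ∀ j, 0 < ℓ j)
    (hdisj : Pairwise fun i j => Disjoint (Metric.ball (c i) (ℓ i / 2)) (Metric.ball (c j) (ℓ j / 2)))
    (hunion : Eᶜ = ⋃ j, Metric.ball (c j) (ℓ j / 2))
    (hlen : ∀ j, volume (Metric.ball (c j) (ℓ j / 2)) = ENNReal.ofReal (ℓ j))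
    (hmono : Antitone ℓ) (hlim : Tendsto ℓ atTop (nhds 0)) :
    ∃ x₀ > 0, ∀ x, 0 < x → x < x₀ → ∀ M : ℕ,
      ℓ (M + 1) ≤ (2 / Real.pi) * Real.arcsin (x / 2) →
      (2 / Real.pi) * Real.arcsin (x / 2) < ℓ M →
      (volume {t : AddCircle (1 : ℝ) | ∃ e ∈ E, 2 * Real.sin (Real.pi * dist t e) < x}).toReal
        = (∑' j : ℕ, ℓ (M + 1 + j)) +
            (2 * ((M : ℝ) + 1) / Real.pi) * Real.arcsin (x / 2) + (volume E).toReal :=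
  stmt9_general E hE c ℓ hpos hdisj hunion hlen hmono
end

section
/- For γ > 1, the set E = {e^{iφ_n} : φ_n = c·∑_{k=n}^∞ k^{-γ}} ∪ {1}, where c^{-1} = ∑_{k=1}^∞ k^{-γ}, is closed in the unit circle and has Ahern–Clark type β(E) = 1 - 1/γ. -/
/-! In `ℝ/ℤ` the points of `E` are `θₙ = φₙ / 2π`, decreasing to `0`, with gaps
`θₙ - θₙ₊₁ ≍ n^{-γ}` and `θₙ ≍ ∑_{k ≥ n} k^{-γ} ≍ n^{1-γ}`. Take `N ≍ x^{-1/γ}`.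
The `x`-neighbourhood of `E` is covered by an arc of length `2(θ_N + x)` around `0` and `N` arcs
of length `2x`, so `|E_x| ≲ θ_N + N x`. Conversely, every gap beyond `N` is shorter than `x`, so
`E_x` contains the whole arc `(0, θ_N]` and `|E_x| ≥ θ_N ≳ x^{1-1/γ}`. For the upper bound it is
enough to know `θ_N ≤ N^{s-γ} ∑ k^{-s}` for every `1 < s ≤ γ`, which gives `|E_x| = O(x^β)` for
every `β < 1 - 1/γ`; that suffices for the supremum defining `β(E)`. -/

open MeasureTheory Metric Set Filter
open scoped Topology

/-- Normalized Lebesgue measure `|E_x|` of the open `x`-neighborhood (in arc-length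
distance) of a set on the unit circle, modelled as `ℝ/ℤ` (so `|T| = 1`). -/
noncomputable def nbd (E : Set (AddCircle (1 : ℝ))) (x : ℝ) : ℝ :=
  (volume (Metric.thickening x E)).toReal

/-- The Ahern–Clark type `β(E) = sup {β ∈ ℝ : |E_x| = O(x^β), x → 0}`. -/
noncomputable def ACtype (E : Set (AddCircle (1 : ℝ))) : ℝ :=
  sSup {β : ℝ | (fun x => nbd E x) =O[𝓝[>] (0 : ℝ)] fun x => x ^ β}

/-- The normalizing constant `c` with `c⁻¹ = ∑_{k=1}^∞ k^{-γ}`. -/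
noncomputable def cγ (γ : ℝ) : ℝ := (∑' k : ℕ, ((k : ℝ) + 1) ^ (-γ))⁻¹

/-- The angles `φ_n = c ∑_{k=n}^∞ k^{-γ}` (for `n ≥ 1`). -/
noncomputable def φγ (γ : ℝ) (n : ℕ) : ℝ := cγ γ * ∑' k : ℕ, ((n : ℝ) + (k : ℝ)) ^ (-γ)

/-- The set `E = {e^{iφ_n} : n ≥ 1} ∪ {1}`, viewed on the circle `ℝ/ℤ`
(the point `e^{iφ}` has normalized coordinate `φ / (2π)`). -/
noncomputable def E11 (γ : ℝ) : Set (AddCircle (1 : ℝ)) :=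
  {p | ∃ n : ℕ, 1 ≤ n ∧ p = ((φγ γ n / (2 * Real.pi) : ℝ) : AddCircle (1 : ℝ))} ∪
    {((0 : ℝ) : AddCircle (1 : ℝ))}

open Asymptotics

lemma nbd_nonneg (E : Set (AddCircle (1 : ℝ))) (x : ℝ) : 0 ≤ nbd E x := ENNReal.toReal_nonneg

section RpowNearZero

variable {α β : ℝ}

lemma isBigO_rpow_rpow_nhdsGT_zero (h : β ≤ α) :
    (fun x : ℝ => x ^ α) =O[𝓝[>] 0] fun x => x ^ β := by
  refine IsBigO.of_bound 1 ?_
  filter_upwards [Ioo_mem_nhdsGT (zero_lt_one' ℝ)] with x ⟨hx0, hx1⟩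
  rw [Real.norm_of_nonneg (by positivity), Real.norm_of_nonneg (by positivity), one_mul]
  exact Real.rpow_le_rpow_of_exponent_ge hx0 hx1.le h

lemma le_of_isBigO_rpow_rpow_nhdsGT_zero
    (h : (fun x : ℝ => x ^ α) =O[𝓝[>] 0] fun x => x ^ β) : β ≤ α := by
  by_contra! hlt
  have hpos : 0 < β - α := sub_pos.2 hlt
  obtain ⟨C, hC⟩ := h.bound
  have hlim : Tendsto (fun x : ℝ => C * x ^ (β - α)) (𝓝[>] 0) (𝓝 0) := by
    have := (Real.continuousAt_rpow_const 0 (β - α) (Or.inr hpos.le)).tendsto.mono_left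
      (nhdsWithin_le_nhds (s := Ioi 0))
    simpa [Real.zero_rpow hpos.ne'] using this.const_mul C
  have hge : ∀ᶠ x in 𝓝[>] (0 : ℝ), 1 ≤ C * x ^ (β - α) := by
    filter_upwards [hC, self_mem_nhdsWithin] with x hx (hx0 : 0 < x)
    rw [Real.norm_of_nonneg (by positivity), Real.norm_of_nonneg (by positivity)] at hx
    rw [Real.rpow_sub hx0, mul_div_assoc', le_div_iff₀ (by positivity), one_mul]
    exact hx
  linarith [ge_of_tendsto hlim hge]

theorem sSup_isBigO_rpow_eq {f : ℝ → ℝ} {b : ℝ} (hlow : (fun x : ℝ => x ^ b) =O[𝓝[>] 0] f)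
    (hup : ∀ β < b, f =O[𝓝[>] 0] fun x => x ^ β) :
    sSup {β : ℝ | f =O[𝓝[>] 0] fun x => x ^ β} = b :=
  csSup_eq_of_forall_le_of_forall_lt_exists_gt ⟨b - 1, hup _ (by linarith)⟩
    (fun _ hβ => le_of_isBigO_rpow_rpow_nhdsGT_zero (hlow.trans hβ))
    fun w hw => ⟨(w + b) / 2, hup _ (by linarith), by linarith⟩

end RpowNearZero

lemma exists_ge_le_and_succ_lt {α : Type*} [LinearOrder α] {a : ℕ → α} {t : α} {N : ℕ}
    (ha : ∀ᶠ n in atTop, a n < t) (hN : t ≤ a N) : ∃ n ≥ N, t ≤ a n ∧ a (n + 1) < t := by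
  by_contra! h
  obtain ⟨n, hn, hnN⟩ := (ha.and (eventually_ge_atTop N)).exists
  have hge : ∀ m ≥ N, t ≤ a m := fun m hm => by
    induction m, hm using Nat.le_induction with
    | base => exact hN
    | succ m hm ih => exact h m hm ih
  exact (hge n hnN).not_gt hn

lemma Metric.thickening_subset_ball_union_biUnion {X : Type*} [PseudoMetricSpace X] {E : Set X}
    {z : X} {r x : ℝ} {s : Finset X} (hE : E ⊆ closedBall z r ∪ s) :
    thickening x E ⊆ ball z (r + x) ∪ ⋃ p ∈ s, ball p x := by
  intro q hq
  obtain ⟨p, hp, hqp⟩ := mem_thickening_iff.1 hq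
  rcases hE hp with hp | hp
  · exact Or.inl (mem_ball.2 (by linarith [dist_triangle q p z, mem_closedBall.1 hp]))
  · exact Or.inr (mem_biUnion hp hqp)

namespace AddCircle

variable {T : ℝ}

lemma dist_coe_le_abs_sub (x y : ℝ) : dist (x : AddCircle T) y ≤ |x - y| := by
  rw [dist_eq_norm, ← coe_sub]
  exact QuotientAddGroup.norm_mk_le_norm

variable [Fact (0 < T)]

lemma volume_ball_le (z : AddCircle T) (r : ℝ) : volume (ball z r) ≤ ENNReal.ofReal (2 * r) := by
  refine (measure_mono ball_subset_closedBall).trans ?_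
  rw [volume_closedBall]
  exact ENNReal.ofReal_le_ofReal (min_le_right _ _)

lemma volume_thickening_le {E : Set (AddCircle T)} {z : AddCircle T} {r x : ℝ}
    {s : Finset (AddCircle T)} (hE : E ⊆ closedBall z r ∪ s) :
    volume (thickening x E) ≤ ENNReal.ofReal (2 * (r + x)) + s.card * ENNReal.ofReal (2 * x) :=
  calc volume (thickening x E)
      ≤ volume (ball z (r + x)) + volume (⋃ p ∈ s, ball p x) :=
        (measure_mono (thickening_subset_ball_union_biUnion hE)).trans (measure_union_le _ _)
    _ ≤ ENNReal.ofReal (2 * (r + x)) + s.card • ENNReal.ofReal (2 * x) := by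
        gcongr
        · exact volume_ball_le _ _
        · exact (measure_biUnion_finset_le _ _).trans
            (Finset.sum_le_card_nsmul _ _ _ fun p _ => volume_ball_le p x)
    _ = _ := by rw [nsmul_eq_mul]

lemma ofReal_le_volume_of_forall_Ioc {U : Set (AddCircle T)} (hU : MeasurableSet U) {L : ℝ}
    (hL : L ≤ T) (h : ∀ t ∈ Ioc 0 L, (t : AddCircle T) ∈ U) : ENNReal.ofReal L ≤ volume U := by
  rw [add_projection_respects_measure T 0 hU, zero_add, ← sub_zero L, ← Real.volume_Ioc]
  exact measure_mono fun t ht => ⟨h t ht, ht.1, ht.2.trans hL⟩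

lemma ofReal_le_volume_thickening {a : ℕ → ℝ} (ha : Tendsto a atTop (𝓝 0))
    {E : Set (AddCircle T)} {N : ℕ} {x : ℝ} (hE : ∀ n ≥ N, (a n : AddCircle T) ∈ E)
    (hgap : ∀ n ≥ N, a n - a (n + 1) < x) (hT : a N ≤ T) :
    ENNReal.ofReal (a N) ≤ volume (thickening x E) := by
  refine ofReal_le_volume_of_forall_Ioc isOpen_thickening.measurableSet hT fun t ht => ?_
  obtain ⟨n, hnN, htn, hnt⟩ := exists_ge_le_and_succ_lt (ha.eventually (gt_mem_nhds ht.1)) ht.2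
  refine mem_thickening_iff.2 ⟨_, hE (n + 1) (by omega), (dist_coe_le_abs_sub _ _).trans_lt ?_⟩
  rw [abs_of_pos (sub_pos.2 hnt)]
  linarith [hgap n hnN]

end AddCircle

noncomputable def zetaTail (γ : ℝ) (n : ℕ) : ℝ := ∑' k : ℕ, ((n : ℝ) + k) ^ (-γ)

section ZetaTail

variable {γ : ℝ}

lemma summable_nat_add_rpow_neg (hγ : 1 < γ) (n : ℕ) :
    Summable fun k : ℕ => ((n : ℝ) + k) ^ (-γ) := by
  simpa [add_comm] using (summable_nat_add_iff n).2 (Real.summable_nat_rpow.2 (neg_lt_neg hγ))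

lemma zetaTail_nonneg (γ : ℝ) (n : ℕ) : 0 ≤ zetaTail γ n :=
  tsum_nonneg fun _ => by positivity

lemma zetaTail_eq_add (hγ : 1 < γ) (n : ℕ) :
    zetaTail γ n = (n : ℝ) ^ (-γ) + zetaTail γ (n + 1) := by
  rw [zetaTail, (summable_nat_add_rpow_neg hγ n).tsum_eq_zero_add, zetaTail]
  push_cast
  simp only [add_zero, add_assoc, add_comm (1 : ℝ)]

lemma antitone_zetaTail (hγ : 1 < γ) : Antitone (zetaTail γ) :=
  antitone_nat_of_succ_le fun n => by
    rw [zetaTail_eq_add hγ n]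
    exact le_add_of_nonneg_left (by positivity)

lemma tendsto_zetaTail (γ : ℝ) : Tendsto (zetaTail γ) atTop (𝓝 0) := by
  unfold zetaTail
  simpa [add_comm] using tendsto_sum_nat_add fun k : ℕ => (k : ℝ) ^ (-γ)

lemma one_le_zetaTail_one (hγ : 1 < γ) : 1 ≤ zetaTail γ 1 := by
  unfold zetaTail
  simpa using (summable_nat_add_rpow_neg hγ 1).le_tsum 0 fun _ _ => by positivity

lemma two_rpow_neg_mul_rpow_le_zetaTail (hγ : 1 < γ) {N : ℕ} (hN : 1 ≤ N) :
    (2 : ℝ) ^ (-γ) * (N : ℝ) ^ (1 - γ) ≤ zetaTail γ N := by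
  have hN0 : (0 : ℝ) < N := by exact_mod_cast hN
  calc (2 : ℝ) ^ (-γ) * (N : ℝ) ^ (1 - γ) = N * (2 * N : ℝ) ^ (-γ) := by
        rw [Real.mul_rpow zero_le_two hN0.le, sub_eq_add_neg, add_comm, Real.rpow_add_one hN0.ne']
        ring
    _ = ∑ _k ∈ Finset.range N, (2 * N : ℝ) ^ (-γ) := by simp
    _ ≤ ∑ k ∈ Finset.range N, ((N : ℝ) + k) ^ (-γ) := Finset.sum_le_sum fun k hk => by
        have : (k : ℝ) < N := by exact_mod_cast Finset.mem_range.1 hk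
        exact Real.rpow_le_rpow_of_nonpos (by positivity) (by linarith) (by linarith)
    _ ≤ zetaTail γ N :=
        (summable_nat_add_rpow_neg hγ N).sum_le_tsum _ fun _ _ => by positivity

lemma zetaTail_le_rpow_mul {s : ℝ} (hs : 1 < s) (hsγ : s ≤ γ) {N : ℕ} (hN : 1 ≤ N) :
    zetaTail γ N ≤ (N : ℝ) ^ (s - γ) * zetaTail s 1 := by
  have hN1 : (1 : ℝ) ≤ N := by exact_mod_cast hN
  rw [zetaTail, zetaTail, ← tsum_mul_left]
  refine (summable_nat_add_rpow_neg (hs.trans_le hsγ) N).tsum_le_tsum (fun k => ?_)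
    ((summable_nat_add_rpow_neg hs 1).mul_left _)
  have hNk : (0 : ℝ) < N + k := by positivity
  calc ((N : ℝ) + k) ^ (-γ) = ((N : ℝ) + k) ^ (s - γ) * ((N : ℝ) + k) ^ (-s) := by
        rw [← Real.rpow_add hNk]; ring_nf
    _ ≤ (N : ℝ) ^ (s - γ) * (((1 : ℕ) : ℝ) + k) ^ (-s) := by
        gcongr ?_ * ?_
        · exact Real.rpow_le_rpow_of_nonpos (by positivity) (by simp) (by linarith)
        · exact Real.rpow_le_rpow_of_nonpos (by positivity) (by push_cast; linarith) (by linarith)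

end ZetaTail

section E11

variable {γ : ℝ}

lemma cγ_eq_inv_zetaTail (γ : ℝ) : cγ γ = (zetaTail γ 1)⁻¹ := by
  simp [cγ, zetaTail, add_comm]

lemma cγ_pos (hγ : 1 < γ) : 0 < cγ γ := by
  rw [cγ_eq_inv_zetaTail]
  exact inv_pos.2 (zero_lt_one.trans_le (one_le_zetaTail_one hγ))

lemma cγ_le_one (hγ : 1 < γ) : cγ γ ≤ 1 := by
  rw [cγ_eq_inv_zetaTail]
  exact inv_le_one_of_one_le₀ (one_le_zetaTail_one hγ)

noncomputable def θγ (γ : ℝ) (n : ℕ) : ℝ := φγ γ n / (2 * Real.pi)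

lemma θγ_eq (γ : ℝ) (n : ℕ) : θγ γ n = cγ γ / (2 * Real.pi) * zetaTail γ n := by
  rw [θγ, φγ, zetaTail, mul_div_right_comm]

lemma θγ_nonneg (hγ : 1 < γ) (n : ℕ) : 0 ≤ θγ γ n := by
  rw [θγ_eq]
  have := cγ_pos hγ
  have := zetaTail_nonneg γ n
  positivity

lemma antitone_θγ (hγ : 1 < γ) : Antitone (θγ γ) := fun m n hmn => by
  simp only [θγ_eq]
  have := cγ_pos hγ
  gcongr
  exact antitone_zetaTail hγ hmn

lemma tendsto_θγ (γ : ℝ) : Tendsto (θγ γ) atTop (𝓝 0) := by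
  have := (tendsto_zetaTail γ).const_mul (cγ γ / (2 * Real.pi))
  rw [mul_zero] at this
  exact this.congr fun n => (θγ_eq γ n).symm

lemma θγ_le_zetaTail (hγ : 1 < γ) (n : ℕ) : θγ γ n ≤ zetaTail γ n := by
  rw [θγ_eq]
  refine mul_le_of_le_one_left (zetaTail_nonneg γ n) ?_
  rw [div_le_one (by positivity)]
  linarith [cγ_le_one hγ, Real.pi_gt_three]

lemma θγ_le_one (hγ : 1 < γ) {n : ℕ} (hn : 1 ≤ n) : θγ γ n ≤ 1 := by
  have hζ : zetaTail γ 1 ≠ 0 := (zero_lt_one.trans_le (one_le_zetaTail_one hγ)).ne'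
  calc θγ γ n ≤ θγ γ 1 := antitone_θγ hγ hn
    _ = (2 * Real.pi)⁻¹ := by
        rw [θγ_eq, cγ_eq_inv_zetaTail]
        field_simp
    _ ≤ 1 := inv_le_one_of_one_le₀ (by linarith [Real.pi_gt_three])

lemma θγ_sub_succ_lt (hγ : 1 < γ) {n : ℕ} (hn : 1 ≤ n) :
    θγ γ n - θγ γ (n + 1) < (n : ℝ) ^ (-γ) := by
  have hpos : (0 : ℝ) < (n : ℝ) ^ (-γ) := Real.rpow_pos_of_pos (by exact_mod_cast hn) _
  have hc : cγ γ / (2 * Real.pi) < 1 := by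
    rw [div_lt_one (by positivity)]
    linarith [cγ_le_one hγ, Real.pi_gt_three]
  rw [θγ_eq, θγ_eq, zetaTail_eq_add hγ n]
  nlinarith

lemma θγ_mem_E11 {n : ℕ} (hn : 1 ≤ n) : (θγ γ n : AddCircle (1 : ℝ)) ∈ E11 γ :=
  Or.inl ⟨n, hn, rfl⟩

lemma E11_eq (γ : ℝ) :
    E11 γ = insert 0 (range fun m : ℕ => (θγ γ (m + 1) : AddCircle (1 : ℝ))) := by
  ext p
  simp only [E11, mem_union, mem_singleton_iff, mem_insert_iff, mem_range,
    QuotientAddGroup.mk_zero, or_comm (a := p = 0)]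
  refine or_congr_left ⟨?_, ?_⟩
  · rintro ⟨n, hn, rfl⟩
    exact ⟨n - 1, by rw [Nat.sub_add_cancel hn]; rfl⟩
  · rintro ⟨m, rfl⟩
    exact ⟨m + 1, Nat.le_add_left 1 m, rfl⟩

lemma isClosed_E11 (γ : ℝ) : IsClosed (E11 γ) := by
  have hlim : Tendsto (fun m : ℕ => (θγ γ (m + 1) : AddCircle (1 : ℝ))) atTop (𝓝 0) := by
    simpa [Function.comp_def] using ((AddCircle.continuous_mk' 1).tendsto 0).comp
      ((tendsto_θγ γ).comp (tendsto_add_atTop_nat 1))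
  rw [E11_eq]
  exact hlim.isCompact_insert_range.isClosed

lemma E11_subset (hγ : 1 < γ) (N : ℕ) :
    E11 γ ⊆ closedBall 0 (θγ γ N) ∪
      ((Finset.range N).image fun n => (θγ γ n : AddCircle (1 : ℝ)) :) := by
  rw [E11_eq]
  rintro p (rfl | ⟨m, rfl⟩)
  · exact Or.inl (by simpa using θγ_nonneg hγ N)
  rcases lt_or_ge (m + 1) N with hmN | hNm
  · exact Or.inr (Finset.mem_coe.2 (Finset.mem_image_of_mem _ (Finset.mem_range.2 hmN)))
  · refine Or.inl (mem_closedBall_zero_iff.2 (QuotientAddGroup.norm_mk_le_norm.trans ?_))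
    rw [Real.norm_of_nonneg (θγ_nonneg hγ _)]
    exact antitone_θγ hγ hNm

lemma nbd_E11_le (hγ : 1 < γ) {x : ℝ} (hx : 0 ≤ x) (N : ℕ) :
    nbd (E11 γ) x ≤ 2 * (θγ γ N + x) + N * (2 * x) := by
  have h0 := θγ_nonneg hγ N
  refine ENNReal.toReal_le_of_le_ofReal (by positivity)
    ((AddCircle.volume_thickening_le (E11_subset hγ N)).trans ?_)
  rw [ENNReal.ofReal_add (by positivity) (by positivity), ENNReal.ofReal_mul (Nat.cast_nonneg N),
    ENNReal.ofReal_natCast]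
  gcongr
  exact (Finset.card_image_le).trans (Finset.card_range N).le

lemma θγ_le_nbd_E11 (hγ : 1 < γ) {x : ℝ} {N : ℕ} (hN : 1 ≤ N) (hNx : (N : ℝ) ^ (-γ) ≤ x) :
    θγ γ N ≤ nbd (E11 γ) x := by
  have hvol := AddCircle.ofReal_le_volume_thickening (tendsto_θγ γ)
    (fun n hn => θγ_mem_E11 (hN.trans hn))
    (fun n hn => (θγ_sub_succ_lt hγ (hN.trans hn)).trans_le <| hNx.trans' <|
      Real.rpow_le_rpow_of_nonpos (by exact_mod_cast hN) (by exact_mod_cast hn) (by linarith))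
    (θγ_le_one hγ hN)
  exact (ENNReal.ofReal_le_iff_le_toReal (measure_ne_top _ _)).1 hvol

end E11

section Asymptotics

variable {γ : ℝ}

lemma isBigO_nbd_E11 (hγ : 1 < γ) {s : ℝ} (hs : 1 < s) (hsγ : s ≤ γ) :
    nbd (E11 γ) =O[𝓝[>] 0] fun x => x ^ (1 - s / γ) := by
  have hγ0 : 0 < γ := by linarith
  refine IsBigO.of_bound (2 * zetaTail s 1 + 6) ?_
  filter_upwards [Ioc_mem_nhdsGT (zero_lt_one' ℝ)] with x ⟨hx0, hx1⟩
  set y := x ^ (-γ⁻¹)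
  have hy : 1 ≤ y := Real.one_le_rpow_of_pos_of_le_one_of_nonpos hx0 hx1 (by simp [hγ0.le])
  set N := ⌈y⌉₊
  have hyN : y ≤ N := Nat.le_ceil y
  have hNy : (N : ℝ) ≤ 2 * y := Nat.ceil_le_two_mul (by linarith)
  have hN : 1 ≤ N := Nat.one_le_ceil_iff.2 (by linarith)
  have hθ : θγ γ N ≤ zetaTail s 1 * x ^ (1 - s / γ) := calc
    θγ γ N ≤ (N : ℝ) ^ (s - γ) * zetaTail s 1 :=
      (θγ_le_zetaTail hγ N).trans (zetaTail_le_rpow_mul hs hsγ hN)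
    _ ≤ y ^ (s - γ) * zetaTail s 1 := by
      gcongr ?_ * _
      · exact zetaTail_nonneg s 1
      · exact Real.rpow_le_rpow_of_nonpos (by linarith) hyN (by linarith)
    _ = zetaTail s 1 * x ^ (1 - s / γ) := by
      rw [← Real.rpow_mul hx0.le, mul_comm]
      congr 2
      field_simp
      ring
  have hx : x ≤ x ^ (1 - s / γ) := by
    have hsγ0 : 0 < s / γ := div_pos (by linarith) hγ0
    simpa only [Real.rpow_one] using
      Real.rpow_le_rpow_of_exponent_ge hx0 hx1 (by linarith : 1 - s / γ ≤ 1)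
  have hNx : N * x ≤ 2 * x ^ (1 - s / γ) := calc
    N * x ≤ 2 * (y * x) := by nlinarith
    _ = 2 * x ^ (1 - 1 / γ) := by
      rw [← Real.rpow_add_one hx0.ne', neg_add_eq_sub, one_div]
    _ ≤ 2 * x ^ (1 - s / γ) := by
      gcongr 2 * ?_
      refine Real.rpow_le_rpow_of_exponent_ge hx0 hx1 ?_
      gcongr
  rw [Real.norm_of_nonneg (nbd_nonneg _ _), Real.norm_of_nonneg (by positivity)]
  linarith [nbd_E11_le hγ hx0.le N]

lemma isBigO_rpow_nbd_E11 (hγ : 1 < γ) :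
    (fun x : ℝ => x ^ (1 - 1 / γ)) =O[𝓝[>] 0] nbd (E11 γ) := by
  have hγ0 : 0 < γ := by linarith
  set K := cγ γ / (2 * Real.pi) * (2 : ℝ) ^ (-γ) * (2 : ℝ) ^ (1 - γ)
  have hK : 0 < K := by have := cγ_pos hγ; positivity
  refine IsBigO.of_bound K⁻¹ ?_
  filter_upwards [Ioc_mem_nhdsGT (zero_lt_one' ℝ)] with x ⟨hx0, hx1⟩
  set y := x ^ (-γ⁻¹)
  have hy : 1 ≤ y := Real.one_le_rpow_of_pos_of_le_one_of_nonpos hx0 hx1 (by simp [hγ0.le])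
  set N := ⌈y⌉₊
  have hyN : y ≤ N := Nat.le_ceil y
  have hNy : (N : ℝ) ≤ 2 * y := Nat.ceil_le_two_mul (by linarith)
  have hN : 1 ≤ N := Nat.one_le_ceil_iff.2 (by linarith)
  have hNx : (N : ℝ) ^ (-γ) ≤ x := calc
    (N : ℝ) ^ (-γ) ≤ y ^ (-γ) := Real.rpow_le_rpow_of_nonpos (by linarith) hyN (by linarith)
    _ = x := by rw [← Real.rpow_mul hx0.le, neg_mul_neg, inv_mul_cancel₀ hγ0.ne', Real.rpow_one]
  have hyx : y ^ (1 - γ) = x ^ (1 - 1 / γ) := by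
    rw [← Real.rpow_mul hx0.le]
    congr 1
    field_simp
    ring
  have hlow : K * x ^ (1 - 1 / γ) ≤ θγ γ N := calc
    K * x ^ (1 - 1 / γ) = cγ γ / (2 * Real.pi) * ((2 : ℝ) ^ (-γ) * (2 * y) ^ (1 - γ)) := by
      rw [Real.mul_rpow zero_le_two (by linarith), hyx]
      ring
    _ ≤ cγ γ / (2 * Real.pi) * ((2 : ℝ) ^ (-γ) * (N : ℝ) ^ (1 - γ)) := by
      have := cγ_pos hγ
      refine mul_le_mul_of_nonneg_left (mul_le_mul_of_nonneg_left ?_ (by positivity))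
        (by positivity)
      exact Real.rpow_le_rpow_of_nonpos (by linarith) hNy (by linarith)
    _ ≤ θγ γ N := by
      rw [θγ_eq]
      have := cγ_pos hγ
      gcongr
      exact two_rpow_neg_mul_rpow_le_zetaTail hγ hN
  rw [Real.norm_of_nonneg (by positivity), Real.norm_of_nonneg (nbd_nonneg _ _),
    le_inv_mul_iff₀ hK]
  exact hlow.trans (θγ_le_nbd_E11 hγ hN hNx)

end Asymptotics

theorem stmt11 (γ : ℝ) (hγ : 1 < γ) :
    IsClosed (E11 γ) ∧ ACtype (E11 γ) = 1 - 1 / γ := by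
  refine ⟨isClosed_E11 γ, sSup_isBigO_rpow_eq (isBigO_rpow_nbd_E11 hγ) fun β hβ => ?_⟩
  have hγ0 : 0 < γ := by linarith
  have hs : 1 < min γ (γ * (1 - β)) := lt_min hγ ((div_lt_iff₀' hγ0).1 (by linarith))
  refine (isBigO_nbd_E11 hγ hs (min_le_left _ _)).trans (isBigO_rpow_rpow_nhdsGT_zero ?_)
  calc β = 1 - γ * (1 - β) / γ := by field_simp; ring
    _ ≤ 1 - min γ (γ * (1 - β)) / γ := by gcongr; exact min_le_right _ _
end

section
/- Let E be a closed subset of the unit circle, t ∈ T, 0 < ξ < 1, and L_ξ(t) = D ∩ B(t,ξ) the lune at t. Let E^ξ := E ∩ closure(L_ξ(t)). Then d(z, E) ≍ d(z, E^ξ) for z ∈ L_ξ(t); that is, there exist constants 0 < c ≤ 1 such that c·d(z,E^ξ) ≤ d(z,E) ≤ d(z,E^ξ) for all z in the lune (assuming E^ξ is nonempty). -/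
/-!
Near a vertex `v` of the lune (a point of the unit circle with `‖v - t‖ = ξ`) the closed lune is
a wedge with opening angle bounded away from `π`, so for `z` in the lune close to `v` the two
defects `1 - ‖z‖` and `ξ - ‖z - t‖` together dominate `‖z - v‖`. Both defects are at most
`‖z - w‖` for any `w` on the unit circle outside the lune, whence `ξ ‖z - v‖ ≤ 8 ‖z - w‖`.

Now let `z` lie in the lune and `w ∈ E`. If `w` is in the closed lune, then `w ∈ E^ξ`. Otherwise,
either `‖z - w‖ ≥ δ` and we use `d(z, E^ξ) ≤ 2`, or `‖z - w‖ < δ`; since the closed lune meets the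
closed set `{w ∈ E | ξ ≤ ‖w - t‖}` only in vertices, compactness then puts `z` within `ξ / 12` of
a vertex belonging to `E`, hence to `E^ξ`, and the wedge estimate applies.
-/

open Metric Set

/-- Coordinates of the wedge estimate at the vertex `1`: `z = x + yi`, `τ = α + βi`,
`r = ‖z - 1‖`; the opening of the wedge is measured by `|β| ≥ ξ / 2`. -/
theorem lune_vertex_estimate {ξ α β x y r : ℝ} (hξ0 : 0 < ξ) (hξ1 : ξ ≤ 1)
    (hτ : α ^ 2 + β ^ 2 = 1) (hτ1 : (1 - α) ^ 2 + β ^ 2 = ξ ^ 2)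
    (hz : x ^ 2 + y ^ 2 ≤ 1) (hzτ : (x - α) ^ 2 + (y - β) ^ 2 ≤ ξ ^ 2)
    (hr0 : 0 ≤ r) (hr : r ^ 2 = (x - 1) ^ 2 + y ^ 2) (hnear : r ≤ ξ / 12) :
    ξ * r ≤ 2 * ((1 - (x ^ 2 + y ^ 2)) + (ξ ^ 2 - ((x - α) ^ 2 + (y - β) ^ 2))) := by
  obtain ⟨a, rfl⟩ : ∃ a, x = 1 + a := ⟨x - 1, by ring⟩
  have hα : 1 - α = ξ ^ 2 / 2 := by linear_combination (hτ1 - hτ) / 2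
  have hξ2 : ξ ^ 2 ≤ 1 := pow_le_one₀ hξ0.le hξ1
  have hβ : ξ / 2 ≤ |β| := by
    refine (sq_le_sq₀ (by positivity) (abs_nonneg _)).1 ?_
    rw [sq_abs]
    nlinarith [mul_nonneg (sq_nonneg ξ) (by linarith : 0 ≤ 3 - ξ ^ 2)]
  have hβ1 : |β| ≤ 1 := by
    rw [abs_le]; constructor <;> nlinarith [sq_nonneg α]
  obtain ⟨b, hb⟩ : ∃ b, b = ξ ^ 2 / 2 * a - β * y := ⟨_, rfl⟩
  have hdisk : 2 * a + r ^ 2 ≤ 0 := by nlinarith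
  have hball : 2 * b + r ^ 2 ≤ 0 := by rw [hb, ← hα]; nlinarith
  have ha0 : a ≤ 0 := by nlinarith [sq_nonneg r]
  have hb0 : b ≤ 0 := by nlinarith [sq_nonneg r]
  have hy : |β| * |y| ≤ -a / 2 - b := by
    rw [← abs_mul, show β * y = ξ ^ 2 / 2 * a - b by linarith, abs_le]
    constructor
    · nlinarith [mul_nonneg (neg_nonneg.2 ha0) (sub_nonneg.2 hξ2)]
    · nlinarith [mul_nonneg (neg_nonneg.2 ha0) (sq_nonneg ξ)]
  have hray : r ≤ -a + |y| := by
    rw [← abs_of_nonpos ha0]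
    refine (sq_le_sq₀ hr0 (by positivity)).1 ?_
    nlinarith [sq_abs a, sq_abs y, mul_nonneg (abs_nonneg a) (abs_nonneg y)]
  have hβr : ξ / 2 * r ≤ |β| * -a + |β| * |y| := by
    rw [← mul_add]
    exact (mul_le_mul_of_nonneg_right hβ hr0).trans (mul_le_mul_of_nonneg_left hray (abs_nonneg β))
  have hβa : |β| * -a ≤ -a := mul_le_of_le_one_left (neg_nonneg.2 ha0) hβ1
  have hr2 : r ^ 2 ≤ ξ / 12 * r := by rw [sq]; exact mul_le_mul_of_nonneg_right hnear hr0
  have hQ : (1 - ((1 + a) ^ 2 + y ^ 2)) + (ξ ^ 2 - ((1 + a - α) ^ 2 + (y - β) ^ 2))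
      = -2 * a - 2 * b - 2 * r ^ 2 := by
    linear_combination 2 * hr - hτ1 + 2 * hb - 2 * a * hα
  rw [hQ]
  linarith

theorem norm_sub_one_le_of_mem_lune {ξ : ℝ} (hξ0 : 0 < ξ) (hξ1 : ξ ≤ 1) {τ z : ℂ}
    (hτ : ‖τ‖ = 1) (hτ1 : ‖1 - τ‖ = ξ) (hz : ‖z‖ ≤ 1) (hzτ : ‖z - τ‖ ≤ ξ)
    (hnear : ‖z - 1‖ ≤ ξ / 12) :
    ξ * ‖z - 1‖ ≤ 4 * ((1 - ‖z‖) + (ξ - ‖z - τ‖)) := by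
  have hsq : ∀ x : ℂ, ‖x‖ ^ 2 = x.re ^ 2 + x.im ^ 2 := fun x => by
    rw [Complex.sq_norm, Complex.normSq_apply]; ring
  have hz2 := hsq z
  have hzτ2 := hsq (z - τ)
  simp only [Complex.sub_re, Complex.sub_im] at hzτ2
  have key := lune_vertex_estimate hξ0 hξ1
    (by simpa [hτ] using (hsq τ).symm) (by simpa [hτ1] using (hsq (1 - τ)).symm)
    (by rw [← hz2]; exact pow_le_one₀ (norm_nonneg z) hz)
    (by rw [← hzτ2]; exact pow_le_pow_left₀ (norm_nonneg _) hzτ 2)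
    (norm_nonneg (z - 1)) (by simpa using hsq (z - 1)) hnear
  rw [← hz2, ← hzτ2] at key
  nlinarith [norm_nonneg z, norm_nonneg (z - τ)]

theorem norm_sub_vertex_le {ξ : ℝ} (hξ0 : 0 < ξ) (hξ1 : ξ ≤ 1) {t v z : ℂ}
    (ht : ‖t‖ = 1) (hv : ‖v‖ = 1) (hvt : ‖v - t‖ = ξ) (hz : ‖z‖ ≤ 1) (hzt : ‖z - t‖ ≤ ξ)
    (hnear : ‖z - v‖ ≤ ξ / 12) :
    ξ * ‖z - v‖ ≤ 4 * ((1 - ‖z‖) + (ξ - ‖z - t‖)) := by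
  have hv0 : v ≠ 0 := norm_ne_zero_iff.1 (by rw [hv]; exact one_ne_zero)
  have hrot : ∀ x, ‖v⁻¹ * x‖ = ‖x‖ := fun x => by rw [norm_mul, norm_inv, hv, inv_one, one_mul]
  have hrot_sub : ∀ x y, ‖v⁻¹ * x - v⁻¹ * y‖ = ‖x - y‖ := fun x y => by rw [← mul_sub, hrot]
  have := norm_sub_one_le_of_mem_lune (τ := v⁻¹ * t) (z := v⁻¹ * z) hξ0 hξ1 (by rw [hrot, ht])
    (by rw [← inv_mul_cancel₀ hv0, hrot_sub, hvt]) (by rw [hrot]; exact hz)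
    (by rw [hrot_sub]; exact hzt) (by rw [← inv_mul_cancel₀ hv0, hrot_sub]; exact hnear)
  rwa [← inv_mul_cancel₀ hv0, hrot_sub, hrot, hrot_sub] at this

theorem norm_sub_vertex_le_norm_sub {ξ : ℝ} (hξ0 : 0 < ξ) (hξ1 : ξ ≤ 1) {t v z w : ℂ}
    (ht : ‖t‖ = 1) (hv : ‖v‖ = 1) (hvt : ‖v - t‖ = ξ) (hz : ‖z‖ ≤ 1) (hzt : ‖z - t‖ ≤ ξ)
    (hnear : ‖z - v‖ ≤ ξ / 12) (hw : ‖w‖ = 1) (hwt : ξ ≤ ‖w - t‖) :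
    ξ * ‖z - v‖ ≤ 8 * ‖z - w‖ := by
  have hdisk : 1 - ‖z‖ ≤ ‖z - w‖ := by
    rw [← hw, norm_sub_rev]; exact norm_sub_norm_le w z
  have hball : ξ - ‖z - t‖ ≤ ‖z - w‖ := by
    have := norm_sub_le_norm_sub_add_norm_sub w z t
    rw [norm_sub_rev w z] at this; linarith
  linarith [norm_sub_vertex_le hξ0 hξ1 ht hv hvt hz hzt hnear]

theorem closure_ball_inter_ball {E : Type*} [NormedAddCommGroup E] [NormedSpace ℝ E]
    {x y : E} {r s : ℝ} (h : (ball x r ∩ ball y s).Nonempty) :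
    closure (ball x r ∩ ball y s) = closedBall x r ∩ closedBall y s := by
  obtain ⟨p, hpx, hpy⟩ := h
  have hint : interior (closedBall x r ∩ closedBall y s) = ball x r ∩ ball y s := by
    rw [interior_inter, interior_closedBall x (pos_of_mem_ball hpx).ne',
      interior_closedBall y (pos_of_mem_ball hpy).ne']
  have hconv : Convex ℝ (closedBall x r ∩ closedBall y s) :=
    (convex_closedBall x r).inter (convex_closedBall y s)
  rw [← hint, hconv.closure_interior_eq_closure_of_nonempty_interior (hint ▸ ⟨p, hpx, hpy⟩),
    (isClosed_closedBall.inter isClosed_closedBall).closure_eq]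

theorem ball_zero_one_inter_ball_nonempty {E : Type*} [NormedAddCommGroup E]
    [NormedSpace ℝ E] {t : E} (ht : ‖t‖ = 1) {ξ : ℝ} (hξ0 : 0 < ξ) (hξ2 : ξ ≤ 2) :
    (ball (0 : E) 1 ∩ ball t ξ).Nonempty := by
  refine ⟨(1 - ξ / 2) • t, ?_, ?_⟩
  · rw [mem_ball_zero_iff, norm_smul, ht, mul_one, Real.norm_of_nonneg (by linarith)]
    linarith
  · rw [mem_ball, dist_eq_norm, sub_smul, one_smul, sub_sub_cancel_left, norm_neg, norm_smul,
      ht, mul_one, Real.norm_of_nonneg (by linarith)]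
    linarith

theorem IsCompact.exists_pos_forall_dist_lt_mem {X : Type*} [PseudoMetricSpace X]
    {K A U : Set X} (hK : IsCompact K) (hA : IsClosed A) (hU : IsOpen U) (hKA : K ∩ A ⊆ U) :
    ∃ δ > 0, ∀ z ∈ K, ∀ w ∈ A, dist z w < δ → z ∈ U := by
  have hdisj : Disjoint (K \ U) A :=
    Set.disjoint_left.2 fun x hx hxA => hx.2 (hKA ⟨hx.1, hxA⟩)
  obtain ⟨δ, hδ, hthick⟩ := hdisj.exists_thickenings (hK.diff hU) hA
  refine ⟨δ, hδ, fun z hz w hw hzw => by_contra fun hzU => ?_⟩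
  exact hthick.ne_of_mem (self_subset_thickening hδ _ ⟨hz, hzU⟩)
    (mem_thickening_iff.2 ⟨w, hw, hzw⟩) rfl

theorem exists_pos_dist_lt_vertex_of_dist_lt {E : Set ℂ} (hE : IsClosed E) (t : ℂ)
    {ξ r : ℝ} (hr : 0 < r) :
    ∃ δ > 0, ∀ z ∈ closedBall (0 : ℂ) 1 ∩ closedBall t ξ, ∀ w ∈ E, ξ ≤ ‖w - t‖ →
      dist z w < δ → ∃ v ∈ E, ‖v - t‖ = ξ ∧ dist z v < r := by
  have hK : IsCompact (closedBall (0 : ℂ) 1 ∩ closedBall t ξ) :=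
    (isCompact_closedBall 0 1).inter_right isClosed_closedBall
  have hA : IsClosed {w ∈ E | ξ ≤ ‖w - t‖} :=
    hE.inter (isClosed_le continuous_const (continuous_id.sub continuous_const).norm)
  obtain ⟨δ, hδ, hsep⟩ := hK.exists_pos_forall_dist_lt_mem hA isOpen_thickening
    fun x ⟨hxK, hxE, hxt⟩ => self_subset_thickening hr {v ∈ E | ‖v - t‖ = ξ}
      ⟨hxE, le_antisymm (by simpa [dist_eq_norm] using hxK.2) hxt⟩
  exact ⟨δ, hδ, fun z hz w hw hwt hzw => by
    simpa [and_assoc] using mem_thickening_iff.1 (hsep z hz w ⟨hw, hwt⟩ hzw)⟩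

theorem infDist_le_two {X : Type*} [SeminormedAddCommGroup X] {S : Set X}
    (hS : S ⊆ closedBall 0 1) (hne : S.Nonempty) {z : X} (hz : ‖z‖ ≤ 1) :
    infDist z S ≤ 2 := by
  obtain ⟨e, he⟩ := hne
  refine (infDist_le_dist_of_mem he).trans ((dist_le_norm_add_norm z e).trans ?_)
  linarith [mem_closedBall_zero_iff.1 (hS he)]

theorem mul_infDist_lune_le_dist {E : Set ℂ} (hEs : E ⊆ sphere (0 : ℂ) 1) {t : ℂ}
    (ht : ‖t‖ = 1) {ξ δ : ℝ} (hξ0 : 0 < ξ) (hξ1 : ξ ≤ 1) (hδ : 0 < δ)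
    (hne : (E ∩ (closedBall (0 : ℂ) 1 ∩ closedBall t ξ)).Nonempty)
    (hsep : ∀ z ∈ closedBall (0 : ℂ) 1 ∩ closedBall t ξ, ∀ w ∈ E, ξ ≤ ‖w - t‖ →
      dist z w < δ → ∃ v ∈ E, ‖v - t‖ = ξ ∧ dist z v < ξ / 12)
    {z : ℂ} (hz : z ∈ ball (0 : ℂ) 1 ∩ ball t ξ) {w : ℂ} (hw : w ∈ E) :
    min (ξ / 8) (δ / 2) * infDist z (E ∩ (closedBall 0 1 ∩ closedBall t ξ)) ≤ dist z w := by
  have hnorm : ∀ u ∈ E, ‖u‖ = 1 := fun u hu => mem_sphere_zero_iff_norm.1 (hEs hu)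
  have hz1 : ‖z‖ ≤ 1 := (mem_ball_zero_iff.1 hz.1).le
  have hzt : ‖z - t‖ ≤ ξ := (mem_ball_iff_norm.1 hz.2).le
  set c := min (ξ / 8) (δ / 2)
  by_cases hwK : w ∈ closedBall (0 : ℂ) 1 ∩ closedBall t ξ
  · calc c * infDist z (E ∩ (closedBall 0 1 ∩ closedBall t ξ))
          ≤ infDist z (E ∩ (closedBall 0 1 ∩ closedBall t ξ)) :=
            mul_le_of_le_one_left infDist_nonneg ((min_le_left _ _).trans (by linarith))
      _ ≤ dist z w := infDist_le_dist_of_mem ⟨hw, hwK⟩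
  have hwt : ξ ≤ ‖w - t‖ := by
    refine le_of_lt (not_le.1 fun hwt => hwK ⟨?_, ?_⟩)
    · simp [hnorm w hw]
    · rwa [mem_closedBall, dist_eq_norm]
  by_cases hzw : dist z w < δ
  · obtain ⟨v, hvE, hvt, hzv⟩ := hsep z ⟨ball_subset_closedBall hz.1, ball_subset_closedBall hz.2⟩
      w hw hwt hzw
    have hvK : v ∈ E ∩ (closedBall 0 1 ∩ closedBall t ξ) :=
      ⟨hvE, by simp [dist_eq_norm, hnorm v hvE, hvt]⟩
    rw [dist_eq_norm] at hzv
    calc c * infDist z _ ≤ ξ / 8 * ‖z - v‖ := by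
          rw [← dist_eq_norm]
          exact mul_le_mul (min_le_left _ _) (infDist_le_dist_of_mem hvK) infDist_nonneg
            (by positivity)
      _ ≤ ‖z - w‖ := by
          linarith [norm_sub_vertex_le_norm_sub hξ0 hξ1 ht (hnorm v hvE) hvt hz1 hzt hzv.le
            (hnorm w hw) hwt]
      _ = dist z w := (dist_eq_norm z w).symm
  · calc c * infDist z _ ≤ δ / 2 * 2 :=
          mul_le_mul (min_le_right _ _) (infDist_le_two (inter_subset_right.trans
            inter_subset_left) hne hz1) infDist_nonneg (by positivity)
      _ ≤ dist z w := by linarith [not_lt.1 hzw]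

/-- Let `E` be a closed subset of the unit circle, `t` on the circle,
`0 < ξ < 1`, and `L_ξ(t) = 𝔻 ∩ B(t,ξ)` the lune at `t`.  Let
`E^ξ = E ∩ closure (L_ξ(t))` and assume it is nonempty.  Then
`d(z,E) ≍ d(z,E^ξ)` on the lune: there is `0 < c ≤ 1` with
`c · d(z,E^ξ) ≤ d(z,E) ≤ d(z,E^ξ)` for all `z ∈ L_ξ(t)`. -/
theorem stmt18 (E : Set ℂ) (hE : IsClosed E) (hEs : E ⊆ sphere (0 : ℂ) 1)
    (t : ℂ) (ht : t ∈ sphere (0 : ℂ) 1) (ξ : ℝ) (hξ0 : 0 < ξ) (hξ1 : ξ < 1)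
    (hne : (E ∩ closure (ball (0 : ℂ) 1 ∩ ball t ξ)).Nonempty) :
    ∃ c : ℝ, 0 < c ∧ c ≤ 1 ∧ ∀ z ∈ ball (0 : ℂ) 1 ∩ ball t ξ,
      c * infDist z (E ∩ closure (ball (0 : ℂ) 1 ∩ ball t ξ)) ≤ infDist z E ∧
      infDist z E ≤ infDist z (E ∩ closure (ball (0 : ℂ) 1 ∩ ball t ξ)) := by
  have htn : ‖t‖ = 1 := mem_sphere_zero_iff_norm.1 ht
  rw [closure_ball_inter_ball (ball_zero_one_inter_ball_nonempty htn hξ0 (by linarith))] at hne ⊢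
  obtain ⟨δ, hδ, hsep⟩ := exists_pos_dist_lt_vertex_of_dist_lt hE t (by positivity : 0 < ξ / 12)
  refine ⟨min (ξ / 8) (δ / 2), by positivity, (min_le_left _ _).trans (by linarith),
    fun z hz => ⟨?_, infDist_le_infDist_of_subset inter_subset_left hne⟩⟩
  exact (le_infDist (hne.mono inter_subset_left)).2 fun w hw =>
    mul_infDist_lune_le_dist hEs htn hξ0 hξ1.le hδ hne hsep hz hw
end
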